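/- For every fixed k ∈ ℕ and z ∈ ℝ, the normalized Krawtchouk polynomial converges to the normalized Hermite polynomial: C(n,k)^{-1/2} · K_k^{(n)}((n - z√n)/2) → h_k(z) as n → ∞. -/

import Mathlib

/-- The normalized Hermite polynomial
`h_k(z) = (1/√(k!)) (-1)^k e^{z²/2} (d^k/dz^k) e^{-z²/2}`. -/
noncomputable def hermiteN (k : ℕ) (z : ℝ) : ℝ :=
  (1 / Real.sqrt (Nat.factorial k)) * (-1 : ℝ) ^ k * Real.exp (z ^ 2 / 2) *
    iteratedDeriv k (fun t => Real.exp (-t ^ 2 / 2)) z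

/-- Generalized binomial coefficient `C(t, j)` for real `t`. -/
noncomputable def genChoose (t : ℝ) (j : ℕ) : ℝ :=
  (∏ i ∈ Finset.range j, (t - i)) / Nat.factorial j

/-- The Krawtchouk polynomial `K_k^{(n)}(t) = ∑_j (-1)^j C(t,j) C(n-t,k-j)`. -/
noncomputable def kraw (n k : ℕ) (t : ℝ) : ℝ :=
  ∑ j ∈ Finset.range (k + 1),
    (-1 : ℝ) ^ j * genChoose t j * genChoose ((n : ℝ) - t) (k - j)

/-!
Both families satisfy three-term recurrences:
`(k+2) K_{k+2}(t) = (n - 2t) K_{k+1}(t) - (n - k) K_k(t)`, and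
`He_{k+2}(z) = z He_{k+1}(z) - (k+1) He_k(z)` for the monic Hermite polynomials `He_k = √(k!) h_k`.
At `t = (n - z√n)/2` we have `n - 2t = z√n`. Scaling `K_k` by `k! / √(n (n-1) ⋯ (n-k+1))`, which is
`√(k!) / √C(n,k)`, turns the Krawtchouk recurrence into one with coefficients `z √(n/(n-k-1))` and
`(k+1) √((n-k)/(n-k-1))`; these tend to `z` and `k + 1`, so the limits follow by two-step induction.
-/

open Filter Topology Polynomial
open scoped Nat

lemma genChoose_zero (t : ℝ) : genChoose t 0 = 1 := by simp [genChoose]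

lemma genChoose_one (t : ℝ) : genChoose t 1 = t := by simp [genChoose]

lemma succ_mul_genChoose_succ (t : ℝ) (j : ℕ) :
    ((j : ℝ) + 1) * genChoose t (j + 1) = (t - j) * genChoose t j := by
  have : (j ! : ℝ) ≠ 0 := by positivity
  simp only [genChoose, Finset.prod_range_succ, Nat.factorial_succ]
  push_cast
  field_simp

lemma derivative_hermite_succ : ∀ n : ℕ,
    derivative (hermite (n + 1)) = ((n : ℤ) + 1) • hermite n
  | 0 => by simp
  | n + 1 => by
    rw [hermite_succ (n + 1), derivative_sub, derivative_mul, derivative_X, one_mul,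
      derivative_hermite_succ n, derivative_smul]
    simp only [zsmul_eq_mul, hermite_succ n]
    push_cast
    ring

lemma aeval_hermite_succ_succ (n : ℕ) (x : ℝ) :
    aeval x (hermite (n + 2)) = x * aeval x (hermite (n + 1)) - (n + 1) * aeval x (hermite n) := by
  rw [hermite_succ (n + 1), derivative_hermite_succ n]
  simp [zsmul_eq_mul]

lemma hermiteN_eq_aeval_hermite_div (k : ℕ) (z : ℝ) :
    hermiteN k z = aeval z (hermite k) / √(k ! : ℝ) := by
  have hgauss : (fun t : ℝ => Real.exp (-t ^ 2 / 2)) = fun t => Real.exp (-(t ^ 2 / 2)) := by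
    funext t; ring_nf
  have hsign : (-1 : ℝ) ^ k * (-1) ^ k = 1 := by rw [← mul_pow]; norm_num
  have hexp : Real.exp (z ^ 2 / 2) * Real.exp (-(z ^ 2 / 2)) = 1 := by
    rw [← Real.exp_add]; norm_num
  rw [hermiteN, hgauss, iteratedDeriv_eq_iterate, deriv_gaussian_eq_hermite_mul_gaussian]
  linear_combination (aeval z (hermite k) / √(k ! : ℝ)) *
    (Real.exp (z ^ 2 / 2) * Real.exp (-(z ^ 2 / 2)) * hsign + hexp)

section Krawtchouk

noncomputable def krawTerm (t u : ℝ) (m j : ℕ) : ℝ :=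
  (-1) ^ j * genChoose t j * genChoose u (m - j)

/-- `kraw n m t` unfolds to `krawSum t (n - t) m`; the recurrences below hold for any `u`. -/
noncomputable def krawSum (t u : ℝ) (m : ℕ) : ℝ :=
  ∑ j ∈ Finset.range (m + 1), krawTerm t u m j

noncomputable def krawMoment (t u : ℝ) (m : ℕ) : ℝ :=
  ∑ j ∈ Finset.range (m + 1), (j : ℝ) * krawTerm t u m j

variable (t u : ℝ) (p : ℕ)

lemma krawMoment_succ :
    krawMoment t u (p + 1) = krawMoment t u p - t * krawSum t u p := by
  rw [krawMoment, Finset.sum_range_succ', krawMoment, krawSum, Finset.mul_sum,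
    ← Finset.sum_sub_distrib]
  simp only [Nat.cast_zero, zero_mul, add_zero]
  refine Finset.sum_congr rfl fun j _ => ?_
  simp only [krawTerm, Nat.add_sub_add_right, pow_succ]
  push_cast
  linear_combination (-(-1 : ℝ) ^ j * genChoose u (p - j)) * succ_mul_genChoose_succ t j

lemma sum_sub_mul_krawTerm_succ :
    ∑ j ∈ Finset.range (p + 2), ((p : ℝ) + 1 - j) * krawTerm t u (p + 1) j
      = (u - p) * krawSum t u p + krawMoment t u p := by
  rw [Finset.sum_range_succ, krawSum, krawMoment, Finset.mul_sum, ← Finset.sum_add_distrib]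
  simp only [Nat.cast_add, Nat.cast_one, sub_self, zero_mul, add_zero]
  refine Finset.sum_congr rfl fun j hj => ?_
  have hjp : j ≤ p := Nat.lt_succ_iff.mp (Finset.mem_range.mp hj)
  have hsub : p + 1 - j = p - j + 1 := by omega
  have hrec := succ_mul_genChoose_succ u (p - j)
  rw [Nat.cast_sub hjp] at hrec
  simp only [krawTerm, hsub]
  linear_combination ((-1 : ℝ) ^ j * genChoose t j) * hrec

lemma succ_mul_krawSum_succ :
    ((p : ℝ) + 1) * krawSum t u (p + 1) = (u - t - p) * krawSum t u p + 2 * krawMoment t u p := by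
  have hsplit : ((p : ℝ) + 1) * krawSum t u (p + 1)
      = krawMoment t u (p + 1) +
        ∑ j ∈ Finset.range (p + 2), ((p : ℝ) + 1 - j) * krawTerm t u (p + 1) j := by
    rw [krawSum, krawMoment, Finset.mul_sum, ← Finset.sum_add_distrib]
    exact Finset.sum_congr rfl fun j _ => by ring
  rw [hsplit, krawMoment_succ, sum_sub_mul_krawTerm_succ]
  ring

lemma krawSum_succ_succ :
    ((p : ℝ) + 2) * krawSum t u (p + 2)
      = (u - t) * krawSum t u (p + 1) - (u + t - p) * krawSum t u p := by
  have h₂ := succ_mul_krawSum_succ t u (p + 1)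
  push_cast at h₂
  linear_combination h₂ + 2 * krawMoment_succ t u p - succ_mul_krawSum_succ t u p

lemma kraw_succ_succ (n k : ℕ) (t : ℝ) :
    ((k : ℝ) + 2) * kraw n (k + 2) t
      = (n - 2 * t) * kraw n (k + 1) t - (n - k) * kraw n k t := by
  have h := krawSum_succ_succ t (n - t) k
  simp only [krawSum, krawTerm] at h
  rw [kraw, kraw, kraw]
  linear_combination h

end Krawtchouk

lemma tendsto_sqrt_sub_div_sqrt_sub (a b : ℝ) :
    Tendsto (fun n : ℕ => √(n - a) / √(n - b)) atTop (𝓝 1) := by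
  have hratio : Tendsto (fun n : ℕ => √((n - a) / (n - b))) atTop (𝓝 1) := by
    simpa [neg_add_eq_sub] using
      (tendsto_add_mul_div_add_mul_atTop_nhds (-a) (-b) 1 one_ne_zero).sqrt
  refine hratio.congr' ?_
  filter_upwards [eventually_ge_atTop ⌈b⌉₊] with n hn
  exact Real.sqrt_div' _ (sub_nonneg.mpr (Nat.ceil_le.mp hn))

lemma sqrt_descFactorial_succ {n k : ℕ} (hk : k ≤ n) :
    √(n.descFactorial (k + 1) : ℝ) = √((n : ℝ) - k) * √(n.descFactorial k : ℝ) := by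
  have hkn : (k : ℝ) ≤ n := by exact_mod_cast hk
  rw [Nat.descFactorial_succ, Nat.cast_mul, Nat.cast_sub hk, Real.sqrt_mul (by linarith)]

noncomputable def scaledKraw (z : ℝ) (k n : ℕ) : ℝ :=
  k ! * kraw n k ((n - z * √n) / 2) / √(n.descFactorial k : ℝ)

lemma scaledKraw_succ_succ (z : ℝ) {k n : ℕ} (hn : k + 2 ≤ n) :
    scaledKraw z (k + 2) n = z * (√n / √(n - (k + 1 : ℝ))) * scaledKraw z (k + 1) n
      - (k + 1) * (√(n - k : ℝ) / √(n - (k + 1 : ℝ))) * scaledKraw z k n := by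
  have hkn : (k : ℝ) + 2 ≤ n := by exact_mod_cast hn
  have hs₀ : 0 < √(n.descFactorial k : ℝ) :=
    Real.sqrt_pos.mpr (by exact_mod_cast Nat.descFactorial_pos.mpr (by omega))
  have hs₁ : 0 < √(n - k : ℝ) := Real.sqrt_pos.mpr (by linarith)
  have hs₂ : 0 < √(n - (k + 1) : ℝ) := Real.sqrt_pos.mpr (by linarith)
  have hsq : √(n - k : ℝ) ^ 2 = n - k := Real.sq_sqrt (by linarith)
  have hrec := kraw_succ_succ n k ((n - z * √n) / 2)
  unfold scaledKraw
  rw [sqrt_descFactorial_succ (by omega : k + 1 ≤ n), sqrt_descFactorial_succ (by omega : k ≤ n),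
    Nat.factorial_succ, Nat.factorial_succ]
  push_cast
  field_simp
  linear_combination hrec + kraw n k ((n - z * √n) / 2) * hsq

lemma scaledKraw_zero (z : ℝ) (n : ℕ) : scaledKraw z 0 n = 1 := by
  simp [scaledKraw, kraw, genChoose_zero]

lemma scaledKraw_one (z : ℝ) {n : ℕ} (hn : 1 ≤ n) : scaledKraw z 1 n = z := by
  have hs : √(n : ℝ) ≠ 0 := by positivity
  norm_num [scaledKraw, kraw, Finset.sum_range_succ, genChoose_zero, genChoose_one]
  field_simp
  ring

lemma tendsto_scaledKraw (z : ℝ) (k : ℕ) :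
    Tendsto (scaledKraw z k) atTop (𝓝 (aeval z (hermite k))) := by
  induction k using Nat.twoStepInduction with
  | zero => simp [funext (scaledKraw_zero z)]
  | one =>
    refine tendsto_const_nhds.congr' ?_
    filter_upwards [eventually_ge_atTop 1] with n hn
    simp [scaledKraw_one z hn]
  | more k ih₀ ih₁ =>
    have hlim := ((tendsto_sqrt_sub_div_sqrt_sub 0 (k + 1)).const_mul z |>.mul ih₁).sub
      (((tendsto_sqrt_sub_div_sqrt_sub k (k + 1)).const_mul ((k : ℝ) + 1)).mul ih₀)
    simp only [sub_zero, mul_one] at hlim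
    rw [aeval_hermite_succ_succ]
    refine hlim.congr' ?_
    filter_upwards [eventually_ge_atTop (k + 2)] with n hn
    exact (scaledKraw_succ_succ z hn).symm

lemma scaledKraw_div_sqrt_factorial (z : ℝ) (k n : ℕ) :
    scaledKraw z k n / √(k ! : ℝ) = (√(n.choose k : ℝ))⁻¹ * kraw n k ((n - z * √n) / 2) := by
  have hf : 0 < √(k ! : ℝ) := by positivity
  rw [scaledKraw, Nat.descFactorial_eq_factorial_mul_choose, Nat.cast_mul,
    Real.sqrt_mul (by positivity)]
  field_simp
  rw [Real.sq_sqrt (by positivity)]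
  ring

theorem stmt8 (k : ℕ) (z : ℝ) :
    Filter.Tendsto
      (fun n : ℕ =>
        (Real.sqrt (Nat.choose n k))⁻¹ * kraw n k (((n : ℝ) - z * Real.sqrt n) / 2))
      Filter.atTop (nhds (hermiteN k z)) := by
  rw [hermiteN_eq_aeval_hermite_div]
  simpa only [scaledKraw_div_sqrt_factorial] using (tendsto_scaledKraw z k).div_const √(k ! : ℝ)
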